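/- Let R be a ring. Then R is the union of 3 proper right ideals but not the union of 2 proper right ideals if and only if there exists a two-sided ideal I of R such that the quotient ring R/I has exactly 4 elements, x + x = 0 for every x ∈ R/I, and either (i) x·y = 0 for all x, y ∈ R/I, or (ii) R/I contains elements a, b additively generating R/I with a² = a, b² = b, ab = a, ba = b. -/

import Mathlib

/-!
If proper right ideals `A, B, C` cover `R`, each has index `2` and `N = A ∩ B ∩ C` has index `4`,
so `R / N` is a Klein four-group whose three lines are `A / N, B / N, C / N`. Right multiplication
by `y` preserves the three lines, so it acts on `R / N` as `0` or `1`; this is a ring map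
`χ : R → 𝔽₂`. If `χ = 0` then `N` is a two-sided ideal and `R / N` has zero multiplication.
Otherwise `K = ker χ` has index `2`, and `K ∩ P` for whichever `P ∈ {A, B}` differs from `K` is a
two-sided ideal of index `4` modulo which `x y ≡ χ(y) x`: this is the ring `Z`.
Conversely, in both `X` and `Z` every `x * r` is a multiple of `x`, so the three subgroups of order
`2` are right ideals covering the ring, and they pull back to `R`; and no group is the union of two
proper subgroups.
-/

/-- A left ideal of a (possibly non-unital, non-commutative) ring `R`:
an additive subgroup closed under left multiplication by arbitrary ring elements. -/
def IsLeftIdeal {R : Type*} [NonUnitalRing R] (I : AddSubgroup R) : Prop :=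
  ∀ (r : R) ⦃x : R⦄, x ∈ I → r * x ∈ I

/-- A right ideal of a (possibly non-unital, non-commutative) ring `R`:
an additive subgroup closed under right multiplication by arbitrary ring elements. -/
def IsRightIdeal {R : Type*} [NonUnitalRing R] (I : AddSubgroup R) : Prop :=
  ∀ (r : R) ⦃x : R⦄, x ∈ I → x * r ∈ I

/-- A two-sided ideal: both a left and a right ideal. -/
def IsTwoSidedIdeal {R : Type*} [NonUnitalRing R] (I : AddSubgroup R) : Prop :=
  IsLeftIdeal I ∧ IsRightIdeal I

def HasRightIdealCover (R : Type*) [NonUnitalRing R] (n : ℕ) : Prop :=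
  ∃ f : Fin n → AddSubgroup R, (∀ i, IsRightIdeal (f i) ∧ f i ≠ ⊤) ∧ ∀ x : R, ∃ i, x ∈ f i

/-- `Q` is one of the rings `X` (zero multiplication) and `Z` (generated by idempotents `a, b`
with `ab = a`, `ba = b`) of order `4` with elementary abelian additive group. -/
def IsRingXOrZ (Q : Type*) [NonUnitalRing Q] : Prop :=
  Nat.card Q = 4 ∧ (∀ x : Q, x + x = 0) ∧
    ((∀ x y : Q, x * y = 0) ∨
      ∃ a b : Q, AddSubgroup.closure {a, b} = ⊤ ∧ a * a = a ∧ b * b = b ∧ a * b = a ∧ b * a = b)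

namespace AddSubgroup

section AddGroup

variable {G : Type*} [AddGroup G]

theorem exists_notMem_notMem {A B : AddSubgroup G} (hA : A ≠ ⊤) (hB : B ≠ ⊤) :
    ∃ x, x ∉ A ∧ x ∉ B := by
  by_contra! h
  rcases AddSubgroupClass.subset_union.1 fun x (_ : x ∈ (⊤ : AddSubgroup G)) =>
    (em (x ∈ A)).imp id (h x) with hA' | hB'
  · exact hA (top_le_iff.1 hA')
  · exact hB (top_le_iff.1 hB')

theorem sub_mem_of_index_two {H : AddSubgroup G} (h : H.index = 2) {x y : G} (hx : x ∉ H)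
    (hy : y ∉ H) : x - y ∈ H := by
  rw [sub_eq_add_neg, add_mem_iff_of_index_two h, neg_mem_iff]
  exact iff_of_false hx hy

theorem eq_of_le_of_index_two {P Q : AddSubgroup G} (hP : P.index = 2) (hQ : Q.index = 2)
    (hPQ : P ≤ Q) : P = Q := by
  refine le_antisymm hPQ (relIndex_eq_one.1 ?_)
  have := relIndex_mul_index hPQ
  rw [hP, hQ] at this
  omega

theorem index_inf_eq_four {P Q : AddSubgroup G} (hP : P.index = 2) (hQ : Q.index = 2)
    (hPQ : P ≠ Q) : (P ⊓ Q).index = 4 := by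
  have hmul : Q.relIndex P * 2 = (P ⊓ Q).index := by
    rw [← hP, ← inf_relIndex_left, relIndex_mul_index inf_le_left]
  have hne_one : Q.relIndex P ≠ 1 := fun h =>
    hPQ (eq_of_le_of_index_two hP hQ (relIndex_eq_one.1 h))
  have hle : (P ⊓ Q).index ≤ 4 := by simpa [hP, hQ] using index_inf_le (H := P) (K := Q)
  have hne_zero : (P ⊓ Q).index ≠ 0 := index_inf_ne_zero (by omega) (by omega)
  omega

theorem mem_inf_or_sub_mem_inf {P Q : AddSubgroup G} (hQ : Q.index = 2) {u z : G} (hu : u ∈ P)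
    (huQ : u ∉ Q) (hz : z ∈ P) : z ∈ P ⊓ Q ∨ z - u ∈ P ⊓ Q := by
  by_cases hzQ : z ∈ Q
  · exact Or.inl ⟨hz, hzQ⟩
  · exact Or.inr ⟨P.sub_mem hz hu, sub_mem_of_index_two hQ hzQ huQ⟩

theorem eq_top_of_inf_le {A B H : AddSubgroup G} (hA : A.index = 2) (hB : B.index = 2)
    (hABH : A ⊓ B ≤ H) {a b : G} (ha : a ∉ B) (hbB : b ∈ B) (hbA : b ∉ A) (haH : a ∈ H)
    (hbH : b ∈ H) : H = ⊤ := by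
  refine eq_top_iff.2 fun x _ => ?_
  obtain ⟨y, hyB, s, hs, rfl⟩ : ∃ y ∈ B, ∃ s ∈ H, x = y + s := by
    by_cases hx : x ∈ B
    · exact ⟨x, hx, 0, H.zero_mem, (add_zero x).symm⟩
    · exact ⟨x - a, sub_mem_of_index_two hB hx ha, a, haH, (sub_add_cancel x a).symm⟩
  refine H.add_mem ?_ hs
  rw [inf_comm] at hABH
  rcases mem_inf_or_sub_mem_inf hA hbB hbA hyB with hy | hy
  · exact hABH hy
  · exact sub_add_cancel y b ▸ H.add_mem (hABH hy) hbH

structure IsTripleCover (A B C : AddSubgroup G) : Prop where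
  left_ne_top : A ≠ ⊤
  middle_ne_top : B ≠ ⊤
  right_ne_top : C ≠ ⊤
  cover : ∀ x, x ∈ A ∨ x ∈ B ∨ x ∈ C

namespace IsTripleCover

variable {A B C : AddSubgroup G}

theorem rotate (h : IsTripleCover A B C) : IsTripleCover B C A :=
  ⟨h.middle_ne_top, h.right_ne_top, h.left_ne_top,
    fun x => by rcases h.cover x with hx | hx | hx <;> simp [hx]⟩

theorem swap (h : IsTripleCover A B C) : IsTripleCover B A C :=
  ⟨h.middle_ne_top, h.left_ne_top, h.right_ne_top,
    fun x => by rcases h.cover x with hx | hx | hx <;> simp [hx]⟩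

theorem mem_right (h : IsTripleCover A B C) {x : G} (hA : x ∉ A) (hB : x ∉ B) : x ∈ C := by
  simpa [hA, hB] using h.cover x

theorem inf_le (h : IsTripleCover A B C) : A ⊓ B ≤ C := by
  obtain ⟨c, hcA, hcB⟩ := exists_notMem_notMem h.left_ne_top h.middle_ne_top
  intro x hx
  obtain ⟨hxA, hxB⟩ := mem_inf.1 hx
  have hcxA : c + x ∉ A := fun hA => hcA ((add_mem_cancel_right hxA).1 hA)
  have hcxB : c + x ∉ B := fun hB => hcB ((add_mem_cancel_right hxB).1 hB)
  exact (add_mem_cancel_left (h.mem_right hcA hcB)).1 (h.mem_right hcxA hcxB)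

theorem sub_mem_left_of_mem_right (h : IsTripleCover A B C) {x y : G} (hxC : x ∈ C) (hxA : x ∉ A)
    (hyA : y ∉ A) (hyC : y ∉ C) : x - y ∈ A := by
  rcases h.cover (x - y) with hA | hB | hC
  · exact hA
  · have hyB : y ∈ B := h.swap.rotate.mem_right hyA hyC
    exact absurd (h.rotate.inf_le ⟨by simpa using B.add_mem hB hyB, hxC⟩) hxA
  · exact absurd (by simpa using C.add_mem (C.neg_mem hC) hxC) hyC

theorem index_eq_two (h : IsTripleCover A B C) : A.index = 2 := by
  obtain ⟨b, hbA, hbC⟩ := exists_notMem_notMem h.left_ne_top h.right_ne_top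
  obtain ⟨c, hcA, hcB⟩ := exists_notMem_notMem h.left_ne_top h.middle_ne_top
  refine index_eq_two_iff_exists_notMem_and.2 ⟨-b, by simpa using hbA, fun x => ?_⟩
  rw [← sub_eq_add_neg]
  by_cases hxA : x ∈ A
  · exact Or.inr hxA
  by_cases hxC : x ∈ C
  · exact Or.inl (h.sub_mem_left_of_mem_right hxC hxA hbA hbC)
  have h' := h.swap.rotate
  have hxc := h'.sub_mem_left_of_mem_right (h'.mem_right hxA hxC) hxA hcA hcB
  have hbc := h'.sub_mem_left_of_mem_right (h'.mem_right hbA hbC) hbA hcA hcB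
  exact Or.inl (sub_sub_sub_cancel_right x b c ▸ A.sub_mem hxc hbc)

theorem left_ne_middle (h : IsTripleCover A B C) : A ≠ B := by
  rintro rfl
  obtain ⟨x, hxA, hxC⟩ := exists_notMem_notMem h.left_ne_top h.right_ne_top
  exact hxC (h.mem_right hxA hxA)

end IsTripleCover

theorem closure_pair_eq_top_of_card_eq_four (hG : Nat.card G = 4) {a b : G} (ha : a ≠ 0)
    (hb : b ≠ 0) (hab : a ≠ b) : closure {a, b} = ⊤ := by
  have : Finite G := Nat.finite_of_card_ne_zero (by omega)
  set H := closure {a, b}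
  have hlt : 2 < Nat.card H := by
    have := Fintype.ofFinite H
    rw [Nat.card_eq_fintype_card, Fintype.two_lt_card_iff]
    refine ⟨0, ⟨a, subset_closure (by simp)⟩, ⟨b, subset_closure (by simp)⟩, ?_, ?_, ?_⟩ <;>
      simp [Subtype.ext_iff, ha.symm, hb.symm, hab]
  have hdvd : Nat.card H ∣ 4 := hG ▸ H.card_addSubgroup_dvd_card
  have hle : Nat.card H ≤ 4 := Nat.le_of_dvd (by norm_num) hdvd
  refine (H.card_eq_iff_eq_top).1 ?_
  interval_cases h : Nat.card H <;> omega

theorem exists_closure_pair_eq_top_of_card_eq_four (hG : Nat.card G = 4) :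
    ∃ a b : G, closure {a, b} = ⊤ := by
  have : Finite G := Nat.finite_of_card_ne_zero (by omega)
  have := Fintype.ofFinite G
  obtain ⟨x, y, z, hxy, hxz, hyz⟩ := (Fintype.two_lt_card_iff (α := G)).1
    (by rw [← Nat.card_eq_fintype_card]; omega)
  obtain ⟨a, b, ha, hb, hab⟩ : ∃ a b : G, a ≠ 0 ∧ b ≠ 0 ∧ a ≠ b := by
    by_cases hx : x = 0
    · exact ⟨y, z, hx ▸ hxy.symm, hx ▸ hxz.symm, hyz⟩
    by_cases hy : y = 0
    · exact ⟨x, z, hx, hy ▸ hyz.symm, hxz⟩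
    · exact ⟨x, y, hx, hy, hxy⟩
  exact ⟨a, b, closure_pair_eq_top_of_card_eq_four hG ha hb hab⟩

theorem zmultiples_ne_top (hG : 2 < Nat.card G) {w : G} (hw : w + w = 0) :
    zmultiples w ≠ ⊤ := by
  intro htop
  have hcard := Nat.card_zmultiples w
  rw [htop, card_top] at hcard
  have := addOrderOf_le_of_nsmul_eq_zero (x := w) two_pos (by rwa [two_nsmul])
  omega

end AddGroup

section AddCommGroup

variable {G : Type*} [AddCommGroup G]

theorem mem_zmultiples_of_closure_pair_eq_top (h2 : ∀ x : G, x + x = 0) {a b : G}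
    (hab : closure {a, b} = ⊤) (x : G) :
    x ∈ zmultiples a ∨ x ∈ zmultiples b ∨ x ∈ zmultiples (a + b) := by
  have heven : ∀ {k : ℤ}, Even k → ∀ g : G, k • g = 0 := by
    rintro _ ⟨j, rfl⟩ g
    rw [add_zsmul, ← zsmul_add, h2, zsmul_zero]
  obtain ⟨m, n, rfl⟩ := mem_closure_pair.1 (hab ▸ mem_top x)
  rcases Int.even_or_odd m with hm | hm
  · exact Or.inr (Or.inl ⟨n, by simp [heven hm]⟩)
  rcases Int.even_or_odd n with hn | hn
  · exact Or.inl ⟨m, by simp [heven hn]⟩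
  · refine Or.inr (Or.inr ⟨m, ?_⟩)
    dsimp only
    rw [zsmul_add, ← sub_add_cancel n m, add_zsmul, heven (hn.sub_odd hm), zero_add]

namespace IsTripleCover

variable {A B C : AddSubgroup G}

theorem forall_mem_inf_or_forall_sub_mem_inf (h : IsTripleCover A B C) (ρ : G →+ G)
    (hρA : ∀ x ∈ A, ρ x ∈ A) (hρB : ∀ x ∈ B, ρ x ∈ B) (hρC : ∀ x ∈ C, ρ x ∈ C) :
    (∀ x, ρ x ∈ A ⊓ B) ∨ ∀ x, ρ x - x ∈ A ⊓ B := by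
  obtain ⟨a, haB, haC⟩ := exists_notMem_notMem h.middle_ne_top h.right_ne_top
  obtain ⟨b, hbA, hbC⟩ := exists_notMem_notMem h.left_ne_top h.right_ne_top
  have haA : a ∈ A := h.rotate.mem_right haB haC
  have hbB : b ∈ B := h.swap.rotate.mem_right hbA hbC
  have habC : a + b ∈ C := h.mem_right (fun hA => hbA (by simpa using A.sub_mem hA haA))
    (fun hB => haB (by simpa using B.sub_mem hB hbB))
  have hA2 := h.index_eq_two
  have hB2 := h.rotate.index_eq_two
  have hNC := h.inf_le
  have hρab := hρC _ habC
  -- modulo `A ⊓ B`, `ρ` fixes or kills each of `a` and `b`; the mixed cases put `b` or `a` into `C`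
  rcases mem_inf_or_sub_mem_inf hB2 haA haB (hρA a haA) with ha | ha <;>
    rcases mem_inf_or_sub_mem_inf hA2 hbB hbA (hρB b hbB) with hb | hb <;>
    rw [inf_comm B A] at hb
  · have := eq_top_of_inf_le (H := (A ⊓ B).comap ρ) hA2 hB2
      (fun x hx => ⟨hρA x hx.1, hρB x hx.2⟩) haB hbB hbA ha hb
    exact Or.inl fun x => (eq_top_iff' _).1 this x
  · refine absurd ?_ hbC
    have heq : ρ (a + b) - ρ a - (ρ b - b) = b := by rw [map_add]; abel
    exact heq ▸ C.sub_mem (C.sub_mem hρab (hNC ha)) (hNC hb)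
  · refine absurd ?_ haC
    have heq : ρ (a + b) - (ρ a - a) - ρ b = a := by rw [map_add]; abel
    exact heq ▸ C.sub_mem (C.sub_mem hρab (hNC ha)) (hNC hb)
  · have := eq_top_of_inf_le (H := (A ⊓ B).comap (ρ - AddMonoidHom.id G)) hA2 hB2
      (fun x hx => (A ⊓ B).sub_mem ⟨hρA x hx.1, hρB x hx.2⟩ hx) haB hbB hbA ha hb
    exact Or.inr fun x => (eq_top_iff' _).1 this x

end IsTripleCover

end AddCommGroup

end AddSubgroup

section Quotient

variable {R : Type*} [NonUnitalRing R] {H : AddSubgroup R}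

def IsTwoSidedIdeal.toTwoSidedIdeal (h : IsTwoSidedIdeal H) : TwoSidedIdeal R :=
  .mk' H H.zero_mem H.add_mem H.neg_mem (fun {x _} hy => h.1 x hy) (fun {_ y} hx => h.2 y hx)

namespace IsTwoSidedIdeal

variable (h : IsTwoSidedIdeal H)

@[simp]
theorem mem_toTwoSidedIdeal {x : R} : x ∈ h.toTwoSidedIdeal ↔ x ∈ H :=
  TwoSidedIdeal.mem_mk' ..

theorem mk_eq_mk_iff {x y : R} :
    (x : h.toTwoSidedIdeal.ringCon.Quotient) = y ↔ x - y ∈ H := by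
  rw [RingCon.eq, TwoSidedIdeal.rel_iff, mem_toTwoSidedIdeal]

theorem card_quotient : Nat.card h.toTwoSidedIdeal.ringCon.Quotient = H.index :=
  Nat.card_congr <| Quotient.congr (Equiv.refl R) fun x y => by
    change h.toTwoSidedIdeal.ringCon x y ↔ _
    rw [TwoSidedIdeal.rel_iff, mem_toTwoSidedIdeal, QuotientAddGroup.leftRel_apply,
      neg_add_eq_sub, sub_mem_comm_iff, Equiv.refl_apply, Equiv.refl_apply]

theorem add_self_eq_zero (hH : ∀ x, x + x ∈ H) (q : h.toTwoSidedIdeal.ringCon.Quotient) :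
    q + q = 0 := by
  induction q using Quotient.inductionOn with
  | h x => exact (h.mk_eq_mk_iff (x := x + x) (y := 0)).2 (by simpa using hH x)

theorem mul_eq_zero (hH : ∀ x y, x * y ∈ H) (p q : h.toTwoSidedIdeal.ringCon.Quotient) :
    p * q = 0 := by
  induction p, q using Quotient.inductionOn₂ with
  | h x y => exact (h.mk_eq_mk_iff (x := x * y) (y := 0)).2 (by simpa using hH x y)

theorem mul_mk_eq_self {e : R} (he : ∀ x, x * e - x ∈ H)
    (q : h.toTwoSidedIdeal.ringCon.Quotient) : q * e = q := by
  induction q using Quotient.inductionOn with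
  | h x => exact h.mk_eq_mk_iff.2 (he x)

end IsTwoSidedIdeal

end Quotient

section Model

open AddSubgroup

variable {Q : Type*} [NonUnitalRing Q]

theorem isRingXOrZ_of_right_identities (hQ : Nat.card Q = 4) (h2 : ∀ x : Q, x + x = 0) {a b : Q}
    (hab : a ≠ b) (ha : ∀ x, x * a = x) (hb : ∀ x, x * b = x) : IsRingXOrZ Q := by
  have : Finite Q := Nat.finite_of_card_ne_zero (by omega)
  have : Nontrivial Q := Finite.one_lt_card_iff_nontrivial.1 (by omega)
  have hne : ∀ {e : Q}, (∀ x, x * e = x) → e ≠ 0 := by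
    rintro e he rfl
    obtain ⟨x, hx⟩ := exists_ne (0 : Q)
    exact hx (by simpa using (he x).symm)
  exact ⟨hQ, h2, Or.inr ⟨a, b, closure_pair_eq_top_of_card_eq_four hQ (hne ha) (hne hb)
    hab, ha a, hb b, hb a, ha b⟩⟩

namespace IsRingXOrZ

theorem exists_closure_pair_eq_top (h : IsRingXOrZ Q) : ∃ a b : Q, closure {a, b} = ⊤ := by
  obtain ⟨hQ, -, -| ⟨a, b, hab, -⟩⟩ := h
  exacts [exists_closure_pair_eq_top_of_card_eq_four hQ, ⟨a, b, hab⟩]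

theorem mul_mem_zmultiples (h : IsRingXOrZ Q) (x r : Q) : x * r ∈ zmultiples x := by
  obtain ⟨-, -, hmul | ⟨a, b, hgen, haa, hbb, hab, hba⟩⟩ := h
  · exact hmul x r ▸ zero_mem _
  have hid : ∀ c ∈ ({a, b} : Set Q), x * c = x := by
    intro c hc
    have hc_id : AddMonoidHom.mulRight c = AddMonoidHom.id Q :=
      AddMonoidHom.eq_of_eqOn_dense hgen (by
        rintro _ (rfl | rfl) <;> rcases hc with rfl | rfl <;> simp [haa, hbb, hab, hba])
    exact DFunLike.congr_fun hc_id x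
  have hle : closure {a, b} ≤ (zmultiples x).comap (AddMonoidHom.mulLeft x) :=
    (closure_le _).2 fun c hc => by
      rw [SetLike.mem_coe, mem_comap, AddMonoidHom.coe_mulLeft, hid c hc]
      exact mem_zmultiples x
  exact hle (hgen ▸ mem_top r)

theorem hasRightIdealCover_three (h : IsRingXOrZ Q) : HasRightIdealCover Q 3 := by
  obtain ⟨a, b, hgen⟩ := h.exists_closure_pair_eq_top
  have hright : ∀ w : Q, IsRightIdeal (zmultiples w) := fun w r x hx =>
    zmultiples_le.2 hx (h.mul_mem_zmultiples x r)
  refine ⟨![zmultiples a, zmultiples b, zmultiples (a + b)], fun i => ⟨?_, ?_⟩, fun x => ?_⟩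
  · fin_cases i <;> exact hright _
  · fin_cases i <;> exact zmultiples_ne_top (by rw [h.1]; norm_num) (h.2.1 _)
  · rcases mem_zmultiples_of_closure_pair_eq_top h.2.1 hgen x with hx | hx | hx
    exacts [⟨0, hx⟩, ⟨1, hx⟩, ⟨2, hx⟩]

end IsRingXOrZ

end Model

section Forward

variable {R : Type*} [NonUnitalRing R]

open AddSubgroup in
theorem IsTwoSidedIdeal.isRingXOrZ_of_inf {H K : AddSubgroup R} (h : IsTwoSidedIdeal (H ⊓ K))
    (hH : H.index = 2) (hK : K.index = 2) (hHK : H ≠ K)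
    (hmul : (∀ x y : R, x * y ∈ H ⊓ K) ∨ ∃ e f : R, e - f ∉ H ⊓ K ∧
      (∀ x, x * e - x ∈ H ⊓ K) ∧ ∀ x, x * f - x ∈ H ⊓ K) :
    IsRingXOrZ h.toTwoSidedIdeal.ringCon.Quotient := by
  have hcard := h.card_quotient.trans (index_inf_eq_four hH hK hHK)
  have h2 := h.add_self_eq_zero fun x =>
    ⟨add_self_mem_of_index_two hH x, add_self_mem_of_index_two hK x⟩
  rcases hmul with hmul | ⟨e, f, hef, he, hf⟩
  · exact ⟨hcard, h2, Or.inl (h.mul_eq_zero hmul)⟩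
  · exact isRingXOrZ_of_right_identities hcard h2 (mt h.mk_eq_mk_iff.1 hef)
      (h.mul_mk_eq_self he) (h.mul_mk_eq_self hf)

/-- The annihilator of the right `R`-module `R / N`. -/
def AddSubgroup.quotientAnnihilator (N : AddSubgroup R) : AddSubgroup R where
  carrier := {y | ∀ x, x * y ∈ N}
  zero_mem' x := by simp [N.zero_mem]
  add_mem' hy hz x := by rw [mul_add]; exact N.add_mem (hy x) (hz x)
  neg_mem' hy x := by rw [mul_neg]; exact N.neg_mem (hy x)

theorem IsRightIdeal.isTwoSidedIdeal_quotientAnnihilator {N : AddSubgroup R}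
    (hN : IsRightIdeal N) : IsTwoSidedIdeal N.quotientAnnihilator :=
  ⟨fun r y hy x => mul_assoc x r y ▸ hy (x * r), fun r y hy x => mul_assoc x y r ▸ hN r (hy x)⟩

namespace AddSubgroup.IsTripleCover

variable {A B C : AddSubgroup R}

theorem exists_isRingXOrZ_of_right_identity (hT : IsTripleCover A B C) (hA : IsRightIdeal A)
    (hB : IsRightIdeal B) (hdich : ∀ y, (∀ x, x * y ∈ A ⊓ B) ∨ ∀ x, x * y - x ∈ A ⊓ B)
    {e : R} (he : ∀ x, x * e - x ∈ A ⊓ B) :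
    ∃ I : TwoSidedIdeal R, IsRingXOrZ I.ringCon.Quotient := by
  set N := A ⊓ B
  set K := N.quotientAnnihilator
  have hK : IsTwoSidedIdeal K :=
    IsRightIdeal.isTwoSidedIdeal_quotientAnnihilator fun r x hx => ⟨hA r hx.1, hB r hx.2⟩
  have heK : e ∉ K := fun heK => hT.left_ne_top <| (eq_top_iff' A).2 fun x =>
    (sub_sub_cancel (x * e) x ▸ N.sub_mem (heK x) (he x)).1
  have hK2 : K.index = 2 := by
    refine index_eq_two_iff_exists_notMem_and.2 ⟨-e, neg_mem_iff.not.2 heK, fun y => ?_⟩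
    refine (hdich y).symm.imp (fun hy x => ?_) id
    rw [← sub_eq_add_neg, mul_sub, ← sub_sub_sub_cancel_right _ _ x]
    exact N.sub_mem (hy x) (he x)
  obtain ⟨P, hNP, hP, hP2, hKP⟩ : ∃ P, N ≤ P ∧ IsRightIdeal P ∧ P.index = 2 ∧ K ≠ P := by
    by_cases hKA : K = A
    · exact ⟨B, inf_le_right, hB, hT.rotate.index_eq_two, hKA ▸ hT.left_ne_middle⟩
    · exact ⟨A, inf_le_left, hA, hT.index_eq_two, hKA⟩
  obtain ⟨k, hkK, hkP⟩ : ∃ k ∈ K, k ∉ P :=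
    SetLike.not_le_iff_exists.1 fun hle => hKP (eq_of_le_of_index_two hK2 hP2 hle)
  have hI : IsTwoSidedIdeal (K ⊓ P) :=
    ⟨fun r y hy => ⟨hK.1 r hy.1, hNP (hy.1 r)⟩, fun r y hy => ⟨hK.2 r hy.1, hP r hy.2⟩⟩
  have hright : ∀ f, (∀ x, x * f - x ∈ N) → ∀ x, x * f - x ∈ K ⊓ P := fun f hf x =>
    ⟨fun t => by rw [mul_sub, ← mul_assoc]; exact hf (t * x), hNP (hf x)⟩
  refine ⟨hI.toTwoSidedIdeal, hI.isRingXOrZ_of_inf hK2 hP2 hKP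
    (Or.inr ⟨e, e + k, fun h => hkP ?_, hright e he, hright (e + k) fun x => ?_⟩)⟩
  · simpa using P.neg_mem h.2
  · rw [mul_add, add_sub_right_comm]
    exact N.add_mem (he x) (hkK x)

theorem exists_isRingXOrZ (hT : IsTripleCover A B C) (hA : IsRightIdeal A) (hB : IsRightIdeal B)
    (hC : IsRightIdeal C) : ∃ I : TwoSidedIdeal R, IsRingXOrZ I.ringCon.Quotient := by
  have hdich : ∀ y, (∀ x, x * y ∈ A ⊓ B) ∨ ∀ x, x * y - x ∈ A ⊓ B := fun y =>
    hT.forall_mem_inf_or_forall_sub_mem_inf (AddMonoidHom.mulRight y) (fun _ hx => hA y hx)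
      (fun _ hx => hB y hx) (fun _ hx => hC y hx)
  by_cases hzero : ∀ y x : R, x * y ∈ A ⊓ B
  · have hI : IsTwoSidedIdeal (A ⊓ B) :=
      ⟨fun r y _ => hzero y r, fun r y hy => ⟨hA r hy.1, hB r hy.2⟩⟩
    exact ⟨hI.toTwoSidedIdeal, hI.isRingXOrZ_of_inf hT.index_eq_two hT.rotate.index_eq_two
      hT.left_ne_middle (Or.inl fun x y => hzero y x)⟩
  · obtain ⟨e, he⟩ := not_forall.1 hzero
    exact hT.exists_isRingXOrZ_of_right_identity hA hB hdich ((hdich e).resolve_left he)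

end AddSubgroup.IsTripleCover

end Forward

section Transfer

variable {R S : Type*} [NonUnitalRing R] [NonUnitalRing S]

theorem IsRightIdeal.comap (f : R →ₙ+* S) {H : AddSubgroup S} (hH : IsRightIdeal H) :
    IsRightIdeal (H.comap f.toAddMonoidHom) := fun r x hx => by
  simpa using hH (f r) hx

theorem HasRightIdealCover.of_surjective (f : R →ₙ+* S) (hf : Function.Surjective f) {n : ℕ}
    (h : HasRightIdealCover S n) : HasRightIdealCover R n := by
  obtain ⟨g, hg, hcov⟩ := h
  refine ⟨fun i => (g i).comap f.toAddMonoidHom, fun i => ⟨(hg i).1.comap f, fun htop => ?_⟩,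
    fun x => hcov (f x)⟩
  refine (hg i).2 ((AddSubgroup.eq_top_iff' _).2 fun y => ?_)
  obtain ⟨x, rfl⟩ := hf y
  exact (AddSubgroup.eq_top_iff' _).1 htop x

def RingCon.mkₙ (c : RingCon R) : R →ₙ+* c.Quotient where
  toFun := (↑)
  map_mul' _ _ := rfl
  map_zero' := rfl
  map_add' _ _ := rfl

theorem RingCon.mkₙ_surjective (c : RingCon R) : Function.Surjective c.mkₙ :=
  Quotient.mk''_surjective

end Transfer

section Cover

variable {R : Type*} [NonUnitalRing R]

theorem not_hasRightIdealCover_two : ¬ HasRightIdealCover R 2 := by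
  rintro ⟨f, hf, hcov⟩
  obtain ⟨x, h0, h1⟩ := AddSubgroup.exists_notMem_notMem (hf 0).2 (hf 1).2
  obtain ⟨i, hi⟩ := hcov x
  exact (Fin.forall_fin_two (p := fun i => x ∉ f i)).2 ⟨h0, h1⟩ i hi

theorem hasRightIdealCover_three_iff :
    HasRightIdealCover R 3 ↔ ∃ I : TwoSidedIdeal R, IsRingXOrZ I.ringCon.Quotient := by
  refine ⟨fun ⟨f, hf, hcov⟩ => ?_, fun ⟨I, hI⟩ =>
    hI.hasRightIdealCover_three.of_surjective _ I.ringCon.mkₙ_surjective⟩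
  have hT : AddSubgroup.IsTripleCover (f 0) (f 1) (f 2) :=
    ⟨(hf 0).2, (hf 1).2, (hf 2).2, fun x => by simpa [Fin.exists_fin_succ] using hcov x⟩
  exact hT.exists_isRingXOrZ (hf 0).1 (hf 1).1 (hf 2).1

end Cover

/-- A ring has right ideal covering number exactly 3 if and only if it has a factor
ring of order 4 with elementary abelian additive group which either has zero
multiplication, or is generated by elements `a, b` with
`a² = a, b² = b, ab = a, ba = b`. -/
theorem right_ideal_covering_number_eq_three (R : Type*) [NonUnitalRing R] :
    ((∃ f : Fin 3 → AddSubgroup R,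
        (∀ i, IsRightIdeal (f i) ∧ f i ≠ ⊤) ∧ ∀ x : R, ∃ i, x ∈ f i) ∧
      ¬ ∃ f : Fin 2 → AddSubgroup R,
        (∀ i, IsRightIdeal (f i) ∧ f i ≠ ⊤) ∧ ∀ x : R, ∃ i, x ∈ f i) ↔
    ∃ I : TwoSidedIdeal R,
      Nat.card I.ringCon.Quotient = 4 ∧
      (∀ x : I.ringCon.Quotient, x + x = 0) ∧
      ((∀ x y : I.ringCon.Quotient, x * y = 0) ∨
        ∃ a b : I.ringCon.Quotient, AddSubgroup.closure {a, b} = ⊤ ∧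
          a * a = a ∧ b * b = b ∧ a * b = a ∧ b * a = b) :=
  ⟨fun h => hasRightIdealCover_three_iff.1 h.1,
    fun h => ⟨hasRightIdealCover_three_iff.2 h, not_hasRightIdealCover_two⟩⟩
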